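/- Lower bound for dominant relations: for a conjunctive query Q with a connected component E_i of the existential-connectivity graph having dominant relation Ṙ_i, any witness D* to Q(D) contains at least |π_{head(Ṙ_i)} Q(D)| tuples from Ṙ_i. -/

import Mathlib

open Set

/-- A conjunctive query: a set of relation atoms (indexed by `ι`), each with a
set of attributes, together with a set of output (head) attributes. -/
structure CQ (ι Attr : Type) where
  attrs : ι → Set Attr
  head : Set Attr

variable {ι κ Attr V : Type}

/-- A database for `Q`: for each relation, a set of tuples over its attributes. -/
def Db (Q : CQ ι Attr) (V : Type) : Type := ∀ i : ι, Set (↥(Q.attrs i) → V)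

/-- Restriction (projection) of a full assignment to a set of attributes. -/
def restrict (f : Attr → V) (S : Set Attr) : ↥S → V := fun a => f a.1

/-- Query evaluation: projections onto the head of all joint assignments
consistent with every relation. -/
def CQ.eval (Q : CQ ι Attr) (D : Db Q V) : Set (↥Q.head → V) :=
  { h | ∃ f : Attr → V, (∀ i, restrict f (Q.attrs i) ∈ D i) ∧ restrict f Q.head = h }

/-- Sub-database (componentwise inclusion). -/
def Db.le {Q : CQ ι Attr} (D' D : Db Q V) : Prop := ∀ i, D' i ⊆ D i

/-- A witness: a sub-database preserving the query result. -/
def IsWitness (Q : CQ ι Attr) (D D' : Db Q V) : Prop :=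
  Db.le D' D ∧ Q.eval D' = Q.eval D

/-- Total number of tuples of a database. -/
noncomputable def dbSize [Fintype ι] {Q : CQ ι Attr} (D : Db Q V) : ℕ :=
  ∑ i, (D i).ncard

/-- A smallest witness. -/
def IsSmallestWitness [Fintype ι] (Q : CQ ι Attr) (D D' : Db Q V) : Prop :=
  IsWitness Q D D' ∧ ∀ D'' : Db Q V, IsWitness Q D D'' → dbSize D' ≤ dbSize D''

/-- Adjacency in the existential-connectivity graph `G^∃_Q`: two relations are
adjacent if they share a non-output attribute. -/
def exAdj (Q : CQ ι Attr) (i j : ι) : Prop :=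
  ((Q.attrs i ∩ Q.attrs j) \ Q.head).Nonempty

/-- Vertices of `G^∃_Q`: relations containing a non-output attribute. -/
def IsExVertex (Q : CQ ι Attr) (i : ι) : Prop := (Q.attrs i \ Q.head).Nonempty

/-- `E` is a connected component of the existential-connectivity graph `G^∃_Q`. -/
def IsCompOf (Q : CQ ι Attr) (E : Set ι) : Prop :=
  E.Nonempty ∧ (∀ i ∈ E, IsExVertex Q i) ∧
  (∀ i ∈ E, ∀ j : ι, IsExVertex Q j → exAdj Q i j → j ∈ E) ∧
  (∀ i ∈ E, ∀ j ∈ E, Relation.ReflTransGen (fun a b => exAdj Q a b ∧ b ∈ E) i j)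

/-- `r` is a dominant relation for the set `E` of relations: every output
attribute appearing in a relation of `E` also appears in `r`. -/
def IsDominant (Q : CQ ι Attr) (E : Set ι) (r : ι) : Prop :=
  ∀ j ∈ E, Q.attrs j ∩ Q.head ⊆ Q.attrs r

/-
Every answer of `Q` on `D` comes from an assignment that is consistent with every relation of the
witness `D*`, in particular with `R_r`; so its projection onto the output attributes of `R_r` is
the projection of a tuple of `D* r`. Hence that tuple set maps onto `π_{head(R_r)} Q(D)`, and a
finite set has at least as many elements as any set it maps onto.
-/

theorem Set.ncard_le_ncard_of_subset_image {α β : Type*} {s : Set β} {t : Set α} {f : α → β}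
    (hst : s ⊆ f '' t) (ht : t.Finite) : s.ncard ≤ t.ncard :=
  (ncard_le_ncard hst (ht.image f)).trans (ncard_image_le ht)

theorem CQ.domRestrict₂_image_eval_subset (Q : CQ ι Attr) (D : Db Q V) (r : ι) :
    domRestrict₂ (π := fun _ => V) (inter_subset_right (s := Q.attrs r)) '' Q.eval D ⊆
      domRestrict₂ (π := fun _ => V) (inter_subset_left (t := Q.head)) '' D r := by
  rintro _ ⟨_, ⟨f, hf, rfl⟩, rfl⟩
  exact ⟨_, hf r, rfl⟩

theorem dominant_relation_lower_bound_general (Q : CQ ι Attr) (D Dstar : Db Q V)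
    (hfin : ∀ i, (D i).Finite) (hw : IsWitness Q D Dstar)
    (r : ι) :
    ((fun h : ↥Q.head → V => fun a : ↥(Q.attrs r ∩ Q.head) => h ⟨a.1, a.2.2⟩) ''
        Q.eval D).ncard ≤ (Dstar r).ncard := by
  rw [← hw.2]
  exact ncard_le_ncard_of_subset_image (Q.domRestrict₂_image_eval_subset Dstar r)
    ((hfin r).subset (hw.1 r))

/-- Lower bound for dominant relations: for a conjunctive query `Q`
with a connected component `E` of the existential-connectivity graph having
dominant relation `r`, any witness `D*` to `Q(D)` contains at least
`|π_{head(R_r)} Q(D)|` tuples from `R_r`. -/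
theorem dominant_relation_lower_bound (Q : CQ ι Attr) (D Dstar : Db Q V)
    (hfin : ∀ i, (D i).Finite) (hw : IsWitness Q D Dstar)
    (E : Set ι) (hE : IsCompOf Q E) (r : ι) (hrE : r ∈ E)
    (hdom : IsDominant Q E r) :
    ((fun h : ↥Q.head → V => fun a : ↥(Q.attrs r ∩ Q.head) => h ⟨a.1, a.2.2⟩) ''
        Q.eval D).ncard ≤ (Dstar r).ncard :=
  dominant_relation_lower_bound_general Q D Dstar hfin hw r
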